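/- Let n be even, char F ≠ 2, H = {±1} ≤ GL₁(F), and let K ≤ S_n be a transitive subgroup preserving the partition {{1,2},{3,4},…,{n−1,n}}. Let G = H ≀ K ≤ GL_n(F) act on F^n with standard basis e₁,…,e_n. Then the decomposition F^n = ⟨e₁+e₂⟩ ⊕ ⟨e₁−e₂⟩ ⊕ ⋯ ⊕ ⟨e_{n−1}+e_n⟩ ⊕ ⟨e_{n−1}−e_n⟩ is a system of imprimitivity for G distinct from {⟨e₁⟩,…,⟨e_n⟩}. -/

import Mathlib

/-- The element of `GL(ι → W)` acting as `h` on coordinate `i` and trivially elsewhere. -/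
noncomputable def blockGL (F : Type*) [Field F] {ι : Type*} [DecidableEq ι] {W : Type*}
    [AddCommGroup W] [Module F W] (i : ι) (h : LinearMap.GeneralLinearGroup F W) :
    LinearMap.GeneralLinearGroup F (ι → W) :=
  (LinearMap.GeneralLinearGroup.generalLinearEquiv F (ι → W)).symm
    (LinearEquiv.piCongrRight fun j =>
      if j = i then LinearMap.GeneralLinearGroup.generalLinearEquiv F W h
      else LinearEquiv.refl F W)

/-- The element of `GL(ι → W)` permuting the coordinates according to `π`. -/
noncomputable def permGL (F : Type*) [Field F] {ι : Type*} {W : Type*}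
    [AddCommGroup W] [Module F W] (π : Equiv.Perm ι) :
    LinearMap.GeneralLinearGroup F (ι → W) :=
  (LinearMap.GeneralLinearGroup.generalLinearEquiv F (ι → W)).symm
    (LinearEquiv.piCongrLeft' F (fun _ => W) π)

/-- The wreath product `H ≀ K` as a subgroup of `GL(ι → W)`. -/
noncomputable def wreath (F : Type*) [Field F] {ι : Type*} [DecidableEq ι] {W : Type*}
    [AddCommGroup W] [Module F W] (H : Subgroup (LinearMap.GeneralLinearGroup F W))
    (K : Subgroup (Equiv.Perm ι)) : Subgroup (LinearMap.GeneralLinearGroup F (ι → W)) :=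
  Subgroup.closure ({g | ∃ i h, h ∈ H ∧ g = blockGL F i h} ∪ {g | ∃ π ∈ K, g = permGL F π})

/-- `G` permutes the family `Z` of subspaces. -/
def Permutes (F : Type*) [Field F] {V : Type*} [AddCommGroup V] [Module F V]
    (G : Subgroup (LinearMap.GeneralLinearGroup F V)) {ι : Type*}
    (Z : ι → Submodule F V) : Prop :=
  ∀ g ∈ G, ∀ t, (Z t).map ((g : (V →ₗ[F] V)ˣ) : V →ₗ[F] V) ∈ Set.range Z

/-- `Z` is a decomposition of `V` into nonzero subspaces permuted by `G`; together with the
requirement that the index type has more than one element, this is a system of imprimitivity. -/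
def IsSystemOfImprimitivity (F : Type*) [Field F] {V : Type*} [AddCommGroup V] [Module F V]
    (G : Subgroup (LinearMap.GeneralLinearGroup F V)) {ι : Type*} [DecidableEq ι]
    (Z : ι → Submodule F V) : Prop :=
  (∀ t, Z t ≠ ⊥) ∧ DirectSum.IsInternal Z ∧ Permutes F G Z

/-- `G` acts irreducibly on `V`. -/
def IrreducibleOn (F : Type*) [Field F] {V : Type*} [AddCommGroup V] [Module F V]
    (G : Subgroup (LinearMap.GeneralLinearGroup F V)) : Prop :=
  ∀ U : Submodule F V, (∀ g ∈ G, U.map ((g : (V →ₗ[F] V)ˣ) : V →ₗ[F] V) ≤ U) → U = ⊥ ∨ U = ⊤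

/-- `G` acts primitively on `V`: there is no system of imprimitivity. -/
def PrimitiveOn (F : Type*) [Field F] {V : Type*} [AddCommGroup V] [Module F V]
    (G : Subgroup (LinearMap.GeneralLinearGroup F V)) : Prop :=
  ¬ ∃ (ℓ : ℕ) (Z : Fin ℓ → Submodule F V), 1 < ℓ ∧ IsSystemOfImprimitivity F G Z

/-- The element `-1` of `GL₁(F) = GL(F)`. -/
noncomputable def negGL (F : Type*) [Field F] : LinearMap.GeneralLinearGroup F F :=
  ⟨-LinearMap.id, -LinearMap.id, by ext; simp [Module.End.mul_apply], by ext; simp [Module.End.mul_apply]⟩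

/-- The standard basis vector `eᵢ` of `F^n`. -/
def stdVec (F : Type*) [Field F] (n : ℕ) (i : Fin n) : Fin n → F := Pi.single i 1

/-! The lines `⟨e_{2t} ± e_{2t+1}⟩` span `F^n` because `2` is invertible, and there are `n` of
them, so they decompose `F^n` as a direct sum. A sign change in coordinate `2t` or `2t+1` swaps
the two lines of block `t`, and a permutation in `K` maps block `t` onto a block `t'`, possibly
reversed, hence maps `e_{2t} ± e_{2t+1}` to a nonzero multiple of `e_{2t'} ± e_{2t'+1}`. The line
`⟨e₁ + e₂⟩` is not a coordinate line, so the decomposition is not the standard one. -/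

open Submodule in
theorem Submodule.map_span_singleton_of_apply_eq_smul {R V : Type*} [Semiring R]
    [AddCommMonoid V] [Module R V] (f : V →ₗ[R] V) {v w : V} {c : R} (hc : IsUnit c)
    (h : f v = c • w) : (span R {v}).map f = span R {w} := by
  rw [map_span, Set.image_singleton, h, span_singleton_smul_eq hc]

theorem Subgroup.eq_one_or_eq_of_mem_closure_singleton {G : Type*} [Group G] {x g : G}
    (hx : x * x = 1) (hg : g ∈ Subgroup.closure {x}) : g = 1 ∨ g = x := by
  induction hg using Subgroup.closure_induction with
  | mem y hy => exact Or.inr hy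
  | one => exact Or.inl rfl
  | mul y z _ _ hy hz => rcases hy with rfl | rfl <;> rcases hz with rfl | rfl <;> simp [hx]
  | inv y _ hy =>
    rcases hy with rfl | rfl
    · exact Or.inl inv_one
    · exact Or.inr (inv_eq_of_mul_eq_one_right hx)

theorem Pi.single_add_smul_single_notMem_span_single {F ι : Type*} [Field F] [DecidableEq ι]
    {a b : ι} (hab : a ≠ b) {s : F} (hs : s ≠ 0) (i : ι) :
    Pi.single a 1 + s • Pi.single b 1 ∉ Submodule.span F {(Pi.single i 1 : ι → F)} := by
  rintro hmem
  obtain ⟨c, hc⟩ := Submodule.mem_span_singleton.mp hmem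
  have ha := congrFun hc a
  have hb := congrFun hc b
  by_cases hi : a = i
  · subst hi
    exact hs (by simpa [hab.symm, eq_comm] using hb)
  · simp [hab, Ne.symm hi] at ha

def permutingSubgroup {R V ι : Type*} [Semiring R] [AddCommMonoid V] [Module R V] [Finite ι]
    (Z : ι → Submodule R V) : Subgroup (LinearMap.GeneralLinearGroup R V) where
  carrier := {g | ∀ t, (Z t).map (g : V →ₗ[R] V) ∈ Set.range Z}
  one_mem' t := ⟨t, by rw [Units.val_one, Module.End.one_eq_id, Submodule.map_id]⟩
  mul_mem' {g h} hg hh t := by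
    obtain ⟨s, hs⟩ := hh t
    rw [Units.val_mul, Module.End.mul_eq_comp, Submodule.map_comp, ← hs]
    exact hg s
  inv_mem' {g} hg t := by
    -- `g` induces an injective, hence surjective, self-map of the finite set `range Z`.
    have hmaps : Set.MapsTo (Submodule.map (g : V →ₗ[R] V)) (Set.range Z) (Set.range Z) := by
      rintro _ ⟨s, rfl⟩
      exact hg s
    have hinj : Function.Injective (Submodule.map (g : V →ₗ[R] V)) :=
      Submodule.map_injective_of_injective ((Module.End.isUnit_iff _).mp g.isUnit).injective
    obtain ⟨U, hU, hgU⟩ :=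
      (((Set.finite_range Z).injOn_iff_bijOn_of_mapsTo hmaps).mp hinj.injOn).surjOn ⟨t, rfl⟩
    rw [← hgU, ← Submodule.map_comp, ← Module.End.mul_eq_comp, ← Units.val_mul,
      inv_mul_cancel, Units.val_one, Module.End.one_eq_id, Submodule.map_id]
    exact hU

section GeneralLinearGroup

variable {F ι W : Type*} [Field F] [AddCommGroup W] [Module F W]

theorem blockGL_apply [DecidableEq ι] (i : ι) (h : LinearMap.GeneralLinearGroup F W)
    (x : ι → W) (j : ι) :
    (blockGL F i h : (ι → W) →ₗ[F] ι → W) x j =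
      if j = i then (h : W →ₗ[F] W) (x j) else x j := by
  change (LinearEquiv.piCongrRight _ : (ι → W) ≃ₗ[F] ι → W) x j = _
  rw [LinearEquiv.piCongrRight_apply]
  split_ifs <;> simp

theorem blockGL_single [DecidableEq ι] (i j : ι) (h : LinearMap.GeneralLinearGroup F W) (w : W) :
    (blockGL F i h : (ι → W) →ₗ[F] ι → W) (Pi.single j w) =
      Pi.single j (if j = i then (h : W →ₗ[F] W) w else w) := by
  funext k
  rw [blockGL_apply, Pi.apply_single (fun k (w : W) => if k = i then (h : W →ₗ[F] W) w else w)
    (fun k => by split_ifs <;> simp)]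

theorem blockGL_one [DecidableEq ι] (i : ι) : blockGL F (W := W) i 1 = 1 := by
  ext x j
  rw [blockGL_apply]
  split_ifs <;> rfl

theorem permGL_single [DecidableEq ι] (π : Equiv.Perm ι) (j : ι) (w : W) :
    (permGL F (W := W) π : (ι → W) →ₗ[F] ι → W) (Pi.single j w) =
      Pi.single (π j) w := by
  funext k
  change LinearEquiv.piCongrLeft' F (fun _ => W) π (Pi.single j w) k = _
  simp [Pi.single_apply, Equiv.symm_apply_eq]

end GeneralLinearGroup

theorem negGL_apply {F : Type*} [Field F] (w : F) : (negGL F : F →ₗ[F] F) w = -w := rfl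

theorem negGL_mul_self {F : Type*} [Field F] : negGL F * negGL F = 1 := by
  ext
  simp [negGL]

namespace SignWreath

variable {F : Type*} [Field F] {m : ℕ}

def evenIdx (t : Fin m) : Fin (2 * m) := ⟨2 * t.val, by linarith [t.isLt]⟩

def oddIdx (t : Fin m) : Fin (2 * m) := ⟨2 * t.val + 1, by linarith [t.isLt]⟩

theorem evenIdx_ne_oddIdx (t : Fin m) : evenIdx t ≠ oddIdx t := by
  simp [evenIdx, oddIdx, Fin.ext_iff]

theorem exists_eq_evenIdx_or_eq_oddIdx (k : Fin (2 * m)) :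
    ∃ t : Fin m, k = evenIdx t ∨ k = oddIdx t :=
  ⟨⟨k.val / 2, by omega⟩, by simp only [evenIdx, oddIdx, Fin.ext_iff]; omega⟩

def PreservesPairs (π : Equiv.Perm (Fin (2 * m))) : Prop :=
  ∀ t : Fin m, ∃ t' : Fin m,
    ({π (evenIdx t), π (oddIdx t)} : Set (Fin (2 * m))) = {evenIdx t', oddIdx t'}

def pairSign (F : Type*) [Field F] (b : Bool) : F := if b then -1 else 1

theorem pairSign_not (b : Bool) : pairSign F (!b) = -pairSign F b := by
  cases b <;> simp [pairSign]

theorem pairSign_mul_self (b : Bool) : pairSign F b * pairSign F b = 1 := by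
  cases b <;> simp [pairSign]

theorem pairSign_ne_zero (b : Bool) : pairSign F b ≠ 0 :=
  left_ne_zero_of_mul_eq_one (pairSign_mul_self b)

def pairVec (F : Type*) [Field F] (m : ℕ) (p : Fin m × Bool) : Fin (2 * m) → F :=
  Pi.single (evenIdx p.1) 1 + pairSign F p.2 • Pi.single (oddIdx p.1) 1

def pairLine (F : Type*) [Field F] (m : ℕ) (p : Fin m × Bool) :
    Submodule F (Fin (2 * m) → F) :=
  Submodule.span F {pairVec F m p}

theorem pairVec_false_add_pairVec_true (t : Fin m) :
    pairVec F m (t, false) + pairVec F m (t, true) = (2 : F) • Pi.single (evenIdx t) 1 := by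
  simp only [pairVec, pairSign, Bool.false_eq_true, if_false, if_true]
  module

theorem pairVec_false_sub_pairVec_true (t : Fin m) :
    pairVec F m (t, false) - pairVec F m (t, true) = (2 : F) • Pi.single (oddIdx t) 1 := by
  simp only [pairVec, pairSign, Bool.false_eq_true, if_false, if_true]
  module

theorem span_range_pairVec (hchar : (2 : F) ≠ 0) :
    Submodule.span F (Set.range (pairVec F m)) = ⊤ := by
  set S := Submodule.span F (Set.range (pairVec F m))
  have hv (p) : pairVec F m p ∈ S := Submodule.subset_span ⟨p, rfl⟩
  have hsingle (k : Fin (2 * m)) : Pi.single k (1 : F) ∈ S := by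
    obtain ⟨t, rfl | rfl⟩ := exists_eq_evenIdx_or_eq_oddIdx k
    · rw [← inv_smul_smul₀ hchar (Pi.single _ 1), ← pairVec_false_add_pairVec_true]
      exact S.smul_mem _ (S.add_mem (hv _) (hv _))
    · rw [← inv_smul_smul₀ hchar (Pi.single _ 1), ← pairVec_false_sub_pairVec_true]
      exact S.smul_mem _ (S.sub_mem (hv _) (hv _))
  rw [eq_top_iff, ← (Pi.basisFun F (Fin (2 * m))).span_eq, Submodule.span_le]
  rintro _ ⟨k, rfl⟩
  simpa using hsingle k

theorem linearIndependent_pairVec (hchar : (2 : F) ≠ 0) : LinearIndependent F (pairVec F m) :=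
  linearIndependent_of_top_le_span_of_card_eq_finrank (span_range_pairVec hchar).ge
    (by simp [mul_comm])

theorem isInternal_pairLine (hchar : (2 : F) ≠ 0) : DirectSum.IsInternal (pairLine F m) := by
  refine DirectSum.isInternal_submodule_of_iSupIndep_of_iSup_eq_top
    (linearIndependent_pairVec hchar).iSupIndep_span_singleton ?_
  change ⨆ p, Submodule.span F {pairVec F m p} = ⊤
  rw [← Submodule.span_range_eq_iSup, span_range_pairVec hchar]

theorem pairLine_ne_bot (hchar : (2 : F) ≠ 0) (p : Fin m × Bool) : pairLine F m p ≠ ⊥ :=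
  Submodule.span_singleton_eq_bot.not.mpr ((linearIndependent_pairVec hchar).ne_zero p)

theorem pairLine_ne_span_single (p : Fin m × Bool) (i : Fin (2 * m)) :
    pairLine F m p ≠ Submodule.span F {Pi.single i 1} := fun h =>
  Pi.single_add_smul_single_notMem_span_single (evenIdx_ne_oddIdx p.1) (pairSign_ne_zero p.2) i
    (by rw [← h]; exact Submodule.mem_span_singleton_self _)

theorem blockGL_negGL_mem_permutingSubgroup (i : Fin (2 * m)) :
    blockGL F i (negGL F) ∈ permutingSubgroup (pairLine F m) := by
  rintro ⟨t, s⟩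
  have hv : (blockGL F i (negGL F) : (Fin (2 * m) → F) →ₗ[F] Fin (2 * m) → F)
      (pairVec F m (t, s)) =
      Pi.single (evenIdx t) (if evenIdx t = i then -1 else 1) +
        pairSign F s • Pi.single (oddIdx t) (if oddIdx t = i then -1 else 1) := by
    simp only [pairVec, map_add, map_smul, blockGL_single, negGL_apply]
  by_cases he : evenIdx t = i
  · have ho : oddIdx t ≠ i := he ▸ (evenIdx_ne_oddIdx t).symm
    refine ⟨(t, !s), (Submodule.map_span_singleton_of_apply_eq_smul _ isUnit_one.neg ?_).symm⟩
    rw [hv, if_pos he, if_neg ho, pairVec, pairSign_not, Pi.single_neg]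
    module
  by_cases ho : oddIdx t = i
  · refine ⟨(t, !s), (Submodule.map_span_singleton_of_apply_eq_smul _ isUnit_one ?_).symm⟩
    rw [hv, if_neg he, if_pos ho, pairVec, pairSign_not, Pi.single_neg]
    module
  · refine ⟨(t, s), (Submodule.map_span_singleton_of_apply_eq_smul _ isUnit_one ?_).symm⟩
    rw [hv, if_neg he, if_neg ho, one_smul, pairVec]

theorem blockGL_mem_permutingSubgroup (i : Fin (2 * m)) {h : LinearMap.GeneralLinearGroup F F}
    (hh : h ∈ Subgroup.closure {negGL F}) :
    blockGL F i h ∈ permutingSubgroup (pairLine F m) := by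
  rcases Subgroup.eq_one_or_eq_of_mem_closure_singleton negGL_mul_self hh with rfl | rfl
  · exact blockGL_one (F := F) (W := F) i ▸ Subgroup.one_mem _
  · exact blockGL_negGL_mem_permutingSubgroup i

theorem permGL_mem_permutingSubgroup {π : Equiv.Perm (Fin (2 * m))} (hπ : PreservesPairs π) :
    permGL F π ∈ permutingSubgroup (pairLine F m) := by
  rintro ⟨t, s⟩
  obtain ⟨t', ht'⟩ := hπ t
  have hv : (permGL F (W := F) π : (Fin (2 * m) → F) →ₗ[F] Fin (2 * m) → F)
      (pairVec F m (t, s)) =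
      Pi.single (π (evenIdx t)) 1 + pairSign F s • Pi.single (π (oddIdx t)) 1 := by
    simp only [pairVec, map_add, map_smul, permGL_single]
  rcases Set.pair_eq_pair_iff.mp ht' with ⟨he, ho⟩ | ⟨he, ho⟩
  · refine ⟨(t', s), (Submodule.map_span_singleton_of_apply_eq_smul _ isUnit_one ?_).symm⟩
    rw [hv, he, ho, one_smul, pairVec]
  · -- `π` reverses the block, and `e_{2t'+1} + ε e_{2t'} = ε (e_{2t'} + ε e_{2t'+1})`
    refine ⟨(t', s),
      (Submodule.map_span_singleton_of_apply_eq_smul _ (pairSign_ne_zero s).isUnit ?_).symm⟩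
    rw [hv, he, ho, pairVec, smul_add, smul_smul, pairSign_mul_self, one_smul, add_comm]

theorem wreath_le_permutingSubgroup {K : Subgroup (Equiv.Perm (Fin (2 * m)))}
    (hK : ∀ π ∈ K, PreservesPairs π) :
    wreath F (Subgroup.closure {negGL F}) K ≤ permutingSubgroup (pairLine F m) := by
  refine (Subgroup.closure_le _).mpr ?_
  rintro _ (⟨i, h, hh, rfl⟩ | ⟨π, hπ, rfl⟩)
  · exact blockGL_mem_permutingSubgroup i hh
  · exact permGL_mem_permutingSubgroup (hK π hπ)

end SignWreath

/-- Let `n = 2m` be even, `char F ≠ 2`, `H = {±1} ≤ GL₁(F)` and `K ≤ S_n` transitive and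
preserving the partition `{{1,2},…,{n−1,n}}`; let `G = H ≀ K ≤ GL_n(F)` and `e₁,…,e_n` the
standard basis of `F^n`.  Then `F^n = ⟨e₁+e₂⟩ ⊕ ⟨e₁−e₂⟩ ⊕ ⋯ ⊕ ⟨e_{n−1}+e_n⟩ ⊕ ⟨e_{n−1}−e_n⟩`
is a system of imprimitivity for `G`, distinct from `{⟨e₁⟩,…,⟨e_n⟩}`. -/
theorem alternative_soi_for_sign_wreath (F : Type*) [Field F] (hchar : (2 : F) ≠ 0)
    (m : ℕ) (hm : 0 < m) (K : Subgroup (Equiv.Perm (Fin (2 * m))))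
    (hKpart : ∀ π ∈ K, ∀ t : Fin m, ∃ t' : Fin m,
      ({π ⟨2 * t.val, by omega⟩, π ⟨2 * t.val + 1, by omega⟩} : Set (Fin (2 * m))) =
        {⟨2 * t'.val, by omega⟩, ⟨2 * t'.val + 1, by omega⟩}) :
    IsSystemOfImprimitivity F (wreath F (Subgroup.closure {negGL F}) K)
      (fun p : Fin m × Bool =>
        Submodule.span F {stdVec F (2 * m) ⟨2 * p.1.val, by omega⟩ +
          (if p.2 then (-1 : F) else 1) • stdVec F (2 * m) ⟨2 * p.1.val + 1, by omega⟩}) ∧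
    Set.range (fun p : Fin m × Bool =>
        Submodule.span F {stdVec F (2 * m) ⟨2 * p.1.val, by omega⟩ +
          (if p.2 then (-1 : F) else 1) • stdVec F (2 * m) ⟨2 * p.1.val + 1, by omega⟩}) ≠
      Set.range (fun i : Fin (2 * m) => Submodule.span F {stdVec F (2 * m) i}) := by
  show IsSystemOfImprimitivity F _ (SignWreath.pairLine F m) ∧
    Set.range (SignWreath.pairLine F m) ≠ _
  refine ⟨⟨SignWreath.pairLine_ne_bot hchar, SignWreath.isInternal_pairLine hchar,
    fun g hg => SignWreath.wreath_le_permutingSubgroup hKpart hg⟩, fun h => ?_⟩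
  obtain ⟨i, hi⟩ : SignWreath.pairLine F m (⟨0, hm⟩, false) ∈ Set.range _ :=
    h ▸ Set.mem_range_self _
  exact SignWreath.pairLine_ne_span_single _ i hi.symm
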